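/- Let (Φ_i) be a sequence of non-degenerate Orlicz functions and suppose the modular Φ̃(x) = ∑ᵢ Φ_i(x_i) has a strong minimum at 0 on ℓ_Φ, i.e., Φ̃(x^{(n)}) → 0 implies ‖x^{(n)}‖_Φ → 0. Then every x with Φ̃(x) < ∞ satisfies Φ̃(x/λ) < ∞ for all λ > 0 (i.e., ℓ_Φ = h_Φ). -/

import Mathlib

open Filter

/-- The Luxemburg norm associated to a Musielak–Orlicz function `Φ`. -/
noncomputable def luxemburgNorm (Φ : ℕ → ℝ → ℝ) (x : ℕ → ℝ) : ℝ :=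
  sInf {r : ℝ | 0 < r ∧ Summable (fun i => Φ i (x i / r)) ∧ ∑' i, Φ i (x i / r) ≤ 1}

/-!
Cut `x` into its tails `x·𝟙_{[n,∞)}`. Their modulars are tails of the convergent series
`∑ Φᵢ(xᵢ)`, so they tend to `0`, and the strong minimum forces their Luxemburg norms to `0`.
Once the norm of the `N`-th tail is below `λ`, some `r < λ` makes `∑_{i ≥ N} Φᵢ(xᵢ/r)`
finite, and monotonicity of `Φᵢ` in `|t|` bounds `Φᵢ(xᵢ/λ)` by `Φᵢ(xᵢ/r)`.
-/

open Set

theorem Function.Even.apply_abs {α β : Type*} [AddGroup α] [LinearOrder α] {φ : α → β}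
    (heven : φ.Even) (t : α) : φ |t| = φ t := by
  rcases abs_choice t with h | h <;> simp [h, heven.eq]

section EvenMonotone

variable {α β : Type*} [AddCommGroup α] [LinearOrder α] [IsOrderedAddMonoid α] [Preorder β]
  {φ : α → β}

theorem Function.Even.apply_le_apply_of_abs_le (heven : φ.Even) (hmono : MonotoneOn φ (Ici 0))
    {s t : α} (h : |s| ≤ |t|) : φ s ≤ φ t := by
  rw [← heven.apply_abs s, ← heven.apply_abs t]
  exact hmono (abs_nonneg s) (abs_nonneg t) h

theorem Function.Even.apply_zero_le (heven : φ.Even) (hmono : MonotoneOn φ (Ici 0)) (t : α) :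
    φ 0 ≤ φ t :=
  heven.apply_le_apply_of_abs_le hmono (by simp)

end EvenMonotone

section Modular

variable {Φ : ℕ → ℝ → ℝ}

theorem apply_indicator_div (h0 : ∀ i, Φ i 0 = 0) (s : Set ℕ) (x : ℕ → ℝ) (c : ℝ) (i : ℕ) :
    Φ i (s.indicator x i / c) = s.indicator (fun i => Φ i (x i / c)) i := by
  by_cases hi : i ∈ s <;> simp [hi, h0]

theorem summable_div_of_summable_div_of_le (heven : ∀ i, (Φ i).Even)
    (hmono : ∀ i, MonotoneOn (Φ i) (Ici 0)) (h0 : ∀ i, Φ i 0 = 0) {x : ℕ → ℝ} {r lam : ℝ}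
    (hr : 0 < r) (hrlam : r ≤ lam) (hsum : Summable (fun i => Φ i (x i / r))) :
    Summable (fun i => Φ i (x i / lam)) := by
  refine hsum.of_nonneg_of_le (fun i => h0 i ▸ (heven i).apply_zero_le (hmono i) _) fun i => ?_
  refine (heven i).apply_le_apply_of_abs_le (hmono i) ?_
  rw [abs_div, abs_div, abs_of_pos hr, abs_of_pos (hr.trans_le hrlam)]
  gcongr

theorem exists_lt_summable_of_luxemburgNorm_lt {x : ℕ → ℝ} {r₀ lam : ℝ} (hr₀ : 0 < r₀)
    (hsum₀ : Summable (fun i => Φ i (x i / r₀))) (hle₀ : ∑' i, Φ i (x i / r₀) ≤ 1)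
    (h : luxemburgNorm Φ x < lam) :
    ∃ r, 0 < r ∧ r < lam ∧ Summable (fun i => Φ i (x i / r)) := by
  rw [luxemburgNorm] at h
  obtain ⟨r, ⟨hr, hsum, -⟩, hrlam⟩ :=
    (csInf_lt_iff ⟨0, fun r hr => hr.1.le⟩ ⟨r₀, by exact ⟨hr₀, hsum₀, hle₀⟩⟩).1 h
  exact ⟨r, hr, hrlam, hsum⟩

end Modular

theorem tendsto_tsum_indicator_Ici_atTop_zero {f : ℕ → ℝ} (hf : Summable f) :
    Tendsto (fun n => ∑' i, (Ici n).indicator f i) atTop (nhds 0) := by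
  refine (tendsto_sum_nat_add f).congr fun n => ?_
  rw [← (hf.indicator (Ici n)).sum_add_tsum_nat_add n, Finset.sum_eq_zero, zero_add]
  · exact tsum_congr fun i => by simp
  · intro i hi
    simp [Finset.mem_range.mp hi]

theorem summable_of_summable_indicator_Ici {f : ℕ → ℝ} {n : ℕ}
    (h : Summable ((Ici n).indicator f)) : Summable f := by
  rw [← (finite_lt_nat n).summable_compl_iff, summable_subtype_iff_indicator]
  simp only [compl_ofPred, not_lt]
  exact h

theorem heart_eq_of_strong_minimum_general (Φ : ℕ → ℝ → ℝ)
    (heven : ∀ i, ∀ t : ℝ, Φ i (-t) = Φ i t)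
    (h0 : ∀ i, Φ i 0 = 0)
    (hmono : ∀ i, MonotoneOn (Φ i) (Set.Ici (0:ℝ)))
    (hstrong : ∀ x : ℕ → ℕ → ℝ,
      (∀ n, ∃ r > (0:ℝ), Summable (fun i => Φ i (x n i / r))) →
      (∀ n, Summable (fun i => Φ i (x n i))) →
      Tendsto (fun n => ∑' i, Φ i (x n i)) atTop (nhds 0) →
      Tendsto (fun n => luxemburgNorm Φ (x n)) atTop (nhds 0)) :
    ∀ x : ℕ → ℝ, Summable (fun i => Φ i (x i)) →
      ∀ lam : ℝ, 0 < lam → Summable (fun i => Φ i (x i / lam)) := by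
  intro x hx lam hlam
  set tail : ℕ → ℕ → ℝ := fun n => (Ici n).indicator x
  have hΦtail (n : ℕ) (c : ℝ) :
      (fun i => Φ i (tail n i / c)) = (Ici n).indicator (fun i => Φ i (x i / c)) :=
    funext (apply_indicator_div h0 _ _ _)
  have hΦtail₁ (n : ℕ) : (fun i => Φ i (tail n i)) = (Ici n).indicator (fun i => Φ i (x i)) := by
    simpa using hΦtail n 1
  have hsum (n : ℕ) : Summable (fun i => Φ i (tail n i)) := hΦtail₁ n ▸ hx.indicator _
  have hmod : Tendsto (fun n => ∑' i, Φ i (tail n i)) atTop (nhds 0) := by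
    simpa only [hΦtail₁] using tendsto_tsum_indicator_Ici_atTop_zero hx
  have hnorm := hstrong tail (fun n => ⟨1, one_pos, by simpa using hsum n⟩) hsum hmod
  obtain ⟨N, hNnorm, hNmod⟩ :=
    ((hnorm.eventually_lt_const hlam).and (hmod.eventually_le_const one_pos)).exists
  obtain ⟨r, hr, hrlam, hrsum⟩ := exists_lt_summable_of_luxemburgNorm_lt one_pos
    (by simpa using hsum N) (by simpa using hNmod) hNnorm
  have htail := summable_div_of_summable_div_of_le heven hmono h0 hr hrlam.le hrsum
  exact summable_of_summable_indicator_Ici (hΦtail N lam ▸ htail)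

/-- If the modular `Φ̃(x) = ∑ᵢ Φ_i(x_i)` has a strong minimum at `0` on `ℓ_Φ`,
then `ℓ_Φ = h_Φ`: every `x` with finite modular has finite modular after any
scaling `x/λ`, `λ > 0`. -/
theorem heart_eq_of_strong_minimum (Φ : ℕ → ℝ → ℝ)
    (heven : ∀ i, ∀ t : ℝ, Φ i (-t) = Φ i t)
    (hconv : ∀ i, ConvexOn ℝ Set.univ (Φ i))
    (hcont : ∀ i, Continuous (Φ i))
    (h0 : ∀ i, Φ i 0 = 0)
    (hmono : ∀ i, MonotoneOn (Φ i) (Set.Ici (0:ℝ)))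
    (hnondeg : ∀ i, ∀ t : ℝ, 0 < t → 0 < Φ i t)
    (hstrong : ∀ x : ℕ → ℕ → ℝ,
      (∀ n, ∃ r > (0:ℝ), Summable (fun i => Φ i (x n i / r))) →
      (∀ n, Summable (fun i => Φ i (x n i))) →
      Tendsto (fun n => ∑' i, Φ i (x n i)) atTop (nhds 0) →
      Tendsto (fun n => luxemburgNorm Φ (x n)) atTop (nhds 0)) :
    ∀ x : ℕ → ℝ, Summable (fun i => Φ i (x i)) →
      ∀ lam : ℝ, 0 < lam → Summable (fun i => Φ i (x i / lam)) :=
  heart_eq_of_strong_minimum_general Φ heven h0 hmono hstrong
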